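/- arXiv:2604.25246 — 2 statements merged into one kernel-verified Lean document; each statement's English description precedes it below -/
import Mathlib

section
/- Fix integers m ≥ 2, r with 1 ≤ r ≤ m−1, and s ≥ 0 with r + s ≤ m−1. Then for every u ≥ 0, the coefficient of x^u in the power series p_r(x)·p_{m−r−s−1}(x)·p_m(x)^{−1} ∈ ℚ[[x]] equals D_m(r, m−r−s−1; u), the number of Dyck paths of height at most m−1 and semilength r+s+u whose first r steps are up-steps and whose last r+s steps are down-steps. -/
/-- The Chebyshev-type polynomial sequence: `p 0 = p 1 = 1`,
`p (r+2) = p (r+1) - X * p r`. -/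
noncomputable def chebP : ℕ → Polynomial ℚ
  | 0 => 1
  | 1 => 1
  | (r+2) => chebP (r+1) - Polynomial.X * chebP r

/-- The height of a lattice path after its first `i` steps, where the path is
encoded as `st : Fin n → Bool` (`true` = up-step `U = (1,1)`,
`false` = down-step `D = (1,-1)`), starting at `(0,0)`. -/
def heightAt {n : ℕ} (st : Fin n → Bool) (i : ℕ) : ℤ :=
  ∑ j ∈ Finset.univ.filter (fun j : Fin n => (j : ℕ) < i),
    (if st j then (1 : ℤ) else -1)

/-- `dyckCount m a b u` is the number of Dyck paths (lattice paths from `(0,0)`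
ending on the x-axis with steps `U = (1,1)`, `D = (1,-1)` that never go below
the x-axis) of height at most `m-1` and semilength `m-1-b+u` whose first `a`
steps are up-steps and whose last `m-1-b` steps are down-steps. -/
noncomputable def dyckCount (m a b u : ℕ) : ℕ :=
  Nat.card {st : Fin (2 * (m - 1 - b + u)) → Bool //
    heightAt st (2 * (m - 1 - b + u)) = 0 ∧
    (∀ i ≤ 2 * (m - 1 - b + u), 0 ≤ heightAt st i ∧ heightAt st i ≤ (m : ℤ) - 1) ∧
    (∀ j : Fin (2 * (m - 1 - b + u)), (j : ℕ) < a → st j = true) ∧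
    (∀ j : Fin (2 * (m - 1 - b + u)),
        2 * (m - 1 - b + u) - (m - 1 - b) ≤ (j : ℕ) → st j = false)}

/-!
Cutting off the initial `r` up-steps and the final `r + s` down-steps identifies the Dyck paths
in question with walks of length `s + 2u` from height `r` to height `j = r + s` inside the strip
`[0, m - 1]`. Let `F i` be the generating function, by excess length, of such walks started at
height `i`. The first-step decomposition shows that `F` obeys the recurrence of `p` below `j`
and above `j`; since `F (-1) = F m = 0`, this gives `F i = p_i · F 0` for `i ≤ j` and
`F (m - 1 - k) = p_k · F (m - 1)` for `k ≤ m - 1 - j`. The equation at `i = j`, combined with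
`p_{a+b+2} = p_{a+1} p_{b+1} - x p_a p_b`, then yields `p_m · F 0 = p_{m-1-j}`.
-/

open PowerSeries

section Heights

variable {N : ℕ} (st : Fin N → Bool)

lemma heightAt_zero : heightAt st 0 = 0 := by
  simp [heightAt]

lemma heightAt_succ {i : ℕ} (hi : i < N) :
    heightAt st (i + 1) = heightAt st i + if st ⟨i, hi⟩ then 1 else -1 := by
  have : Finset.univ.filter (fun j : Fin N => (j : ℕ) < i + 1) =
      insert ⟨i, hi⟩ (Finset.univ.filter fun j : Fin N => (j : ℕ) < i) := by
    ext j
    simp only [Finset.mem_filter, Finset.mem_univ, true_and, Finset.mem_insert, Fin.ext_iff]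
    omega
  rw [heightAt, this, Finset.sum_insert (by simp), add_comm, heightAt]

lemma abs_heightAt_le {k : ℕ} (hk : k ≤ N) : |heightAt st k| ≤ k := by
  induction k with
  | zero => simp [heightAt_zero]
  | succ k ih =>
    have := abs_le.mp (ih (by omega))
    rw [heightAt_succ st (by omega), abs_le]
    split <;> push_cast <;> constructor <;> linarith

def pathSlice (a n : ℕ) (h : a + n ≤ N) : Fin n → Bool :=
  fun k => st ⟨a + k, by omega⟩

lemma heightAt_add {a n : ℕ} (h : a + n ≤ N) {k : ℕ} (hk : k ≤ n) :
    heightAt st (a + k) = heightAt st a + heightAt (pathSlice st a n h) k := by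
  induction k with
  | zero => simp [heightAt_zero]
  | succ k ih =>
    rw [← add_assoc, heightAt_succ st (by omega), ih (by omega),
      heightAt_succ _ (by omega), add_assoc]
    rfl

lemma heightAt_cons (b : Bool) {k : ℕ} (hk : k ≤ N) :
    heightAt (Fin.cons b st : Fin (N + 1) → Bool) (k + 1) =
      (if b then 1 else -1) + heightAt st k := by
  have hslice : pathSlice (Fin.cons b st : Fin (N + 1) → Bool) 1 N (by omega) = st := by
    funext i
    rw [pathSlice, show (⟨1 + i, _⟩ : Fin (N + 1)) = i.succ by ext; simp; omega, Fin.cons_succ]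
  have hfirst : heightAt (Fin.cons b st : Fin (N + 1) → Bool) (0 + 1) = if b then 1 else -1 := by
    rw [heightAt_succ _ (Nat.succ_pos N), heightAt_zero, zero_add]
    rfl
  rw [add_comm k 1, heightAt_add _ (by omega) hk, hslice, hfirst]

lemma heightAt_of_forall_lt {a : ℕ} (h : ∀ j : Fin N, (j : ℕ) < a → st j = true)
    {k : ℕ} (hka : k ≤ a) (hkN : k ≤ N) : heightAt st k = k := by
  induction k with
  | zero => exact heightAt_zero st
  | succ k ih =>
    rw [heightAt_succ st (by omega), ih (by omega) (by omega), h _ (by simp; omega)]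
    push_cast; rfl

lemma heightAt_add_of_forall_le {c : ℕ} (h : ∀ j : Fin N, c ≤ (j : ℕ) → st j = false)
    {t : ℕ} (ht : c + t ≤ N) : heightAt st (c + t) = heightAt st c - t := by
  induction t with
  | zero => simp
  | succ t ih =>
    rw [← add_assoc, heightAt_succ st (by omega), ih (by omega), h _ (by simp)]
    push_cast; ring

end Heights

section Walks

def IsBoundedWalk (m : ℕ) (i j : ℤ) {n : ℕ} (st : Fin n → Bool) : Prop :=
  (∀ k ≤ n, 0 ≤ i + heightAt st k ∧ i + heightAt st k ≤ (m : ℤ) - 1) ∧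
    i + heightAt st n = j

noncomputable def walkCount (m : ℕ) (i j : ℤ) (n : ℕ) : ℕ :=
  Nat.card {st : Fin n → Bool // IsBoundedWalk m i j st}

variable {m : ℕ} {i j : ℤ}

lemma walkCount_eq_zero_of_not_mem (hi : ¬ (0 ≤ i ∧ i ≤ (m : ℤ) - 1)) (n : ℕ) :
    walkCount m i j n = 0 := by
  have : IsEmpty {st : Fin n → Bool // IsBoundedWalk m i j st} :=
    ⟨fun ⟨st, hrange, _⟩ => hi (by simpa [heightAt_zero] using hrange 0 (Nat.zero_le n))⟩
  exact Nat.card_of_isEmpty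

lemma walkCount_eq_zero_of_lt {n : ℕ} (hn : n < (j - i).natAbs) : walkCount m i j n = 0 := by
  have : IsEmpty {st : Fin n → Bool // IsBoundedWalk m i j st} :=
    ⟨fun ⟨st, _, hend⟩ => by
      have := abs_heightAt_le st le_rfl
      rw [show heightAt st n = j - i by omega, Int.abs_eq_natAbs] at this
      omega⟩
  exact Nat.card_of_isEmpty

lemma walkCount_zero_self (hi : 0 ≤ i ∧ i ≤ (m : ℤ) - 1) : walkCount m i i 0 = 1 := by
  rw [walkCount, Nat.card_eq_one_iff_unique]
  refine ⟨inferInstance, ⟨⟨Fin.elim0, fun k hk => ?_, by simp [heightAt_zero]⟩⟩⟩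
  rw [Nat.le_zero.mp hk, heightAt_zero, add_zero]
  exact hi

lemma isBoundedWalk_cons_iff (hi : 0 ≤ i ∧ i ≤ (m : ℤ) - 1) (b : Bool) {n : ℕ}
    (st : Fin n → Bool) :
    IsBoundedWalk m i j (Fin.cons b st : Fin (n + 1) → Bool) ↔
      IsBoundedWalk m (i + if b then 1 else -1) j st := by
  have hcons : ∀ k ≤ n, i + heightAt (Fin.cons b st : Fin (n + 1) → Bool) (k + 1) =
      (i + if b then 1 else -1) + heightAt st k := fun k hk => by
    rw [heightAt_cons st b hk, add_assoc]
  constructor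
  · rintro ⟨hrange, hend⟩
    refine ⟨fun k hk => ?_, ?_⟩
    · rw [← hcons k hk]
      exact hrange (k + 1) (by omega)
    · rw [← hcons n le_rfl, hend]
  · rintro ⟨hrange, hend⟩
    refine ⟨fun k hk => ?_, by rw [hcons n le_rfl, hend]⟩
    rcases k with _ | k
    · simpa [heightAt_zero] using hi
    · rw [hcons k (by omega)]
      exact hrange k (by omega)

lemma walkCount_succ (hi : 0 ≤ i ∧ i ≤ (m : ℤ) - 1) (n : ℕ) :
    walkCount m i j (n + 1) = walkCount m (i + 1) j n + walkCount m (i - 1) j n := by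
  let e := (Equiv.subtypeEquiv (Fin.consEquiv fun _ => Bool) fun _ => Iff.rfl).symm.trans
    (Equiv.subtypeProdEquivSigmaSubtype fun b (st : Fin n → Bool) =>
      IsBoundedWalk m i j (Fin.cons b st : Fin (n + 1) → Bool))
  rw [walkCount, Nat.card_congr e, Nat.card_sigma, Fintype.sum_bool]
  congr 1 <;> exact Nat.card_congr (Equiv.subtypeEquivRight fun st => by
    rw [isBoundedWalk_cons_iff hi]; simp [sub_eq_add_neg])

end Walks

section Chebyshev

/-- `chebQ k = p_{k-1}`: the convention `p_{-1} = 0` lets the boundary cases of the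
recurrences below be handled uniformly. -/
noncomputable def chebQ : ℕ → ℚ⟦X⟧
  | 0 => 0
  | 1 => 1
  | (k + 2) => chebQ (k + 1) - X * chebQ k

lemma chebQ_add_two (k : ℕ) : chebQ (k + 2) = chebQ (k + 1) - X * chebQ k := rfl

lemma chebQ_succ (k : ℕ) : chebQ (k + 1) = (chebP k : ℚ⟦X⟧) := by
  induction k using Nat.twoStepInduction with
  | zero => simp [chebQ, chebP]
  | one => simp [chebQ, chebP]
  | more k ih₀ ih₁ => rw [chebQ_add_two, ih₀, ih₁, chebP]; push_cast; rfl

lemma constantCoeff_chebP (k : ℕ) : constantCoeff (chebP k : ℚ⟦X⟧) = 1 := by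
  rw [← chebQ_succ]
  induction k using Nat.twoStepInduction with
  | zero => simp [chebQ]
  | one => simp [chebQ]
  | more k _ ih₁ => simp [chebQ_add_two (k + 1), ih₁]

lemma chebQ_add (a b : ℕ) :
    chebQ (a + b + 1) = chebQ (a + 1) * chebQ (b + 1) - X * chebQ a * chebQ b := by
  induction a generalizing b with
  | zero => simp [chebQ]
  | succ a ih =>
    rw [show a + 1 + b + 1 = a + (b + 1) + 1 by ring, ih, chebQ_add_two, chebQ_add_two]
    ring

lemma eq_chebQ_mul_of_recurrence (f : ℕ → ℚ⟦X⟧) {n : ℕ} (h₀ : f 0 = 0)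
    (hrec : ∀ k, k + 2 ≤ n → f (k + 2) = f (k + 1) - X * f k) :
    ∀ k ≤ n, f k = chebQ k * f 1 := by
  intro k
  induction k using Nat.twoStepInduction with
  | zero => simp [chebQ, h₀]
  | one => simp [chebQ]
  | more k ih₀ ih₁ =>
    intro hk
    rw [hrec k hk, ih₀ (by omega), ih₁ (by omega), chebQ_add_two]
    ring

end Chebyshev

section GeneratingFunction

noncomputable def walkGF (m : ℕ) (i j : ℤ) : ℚ⟦X⟧ :=
  mk fun u => (walkCount m i j ((j - i).natAbs + 2 * u) : ℚ)

variable {m : ℕ} {i j : ℤ}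

lemma walkGF_eq_zero_of_not_mem (hi : ¬ (0 ≤ i ∧ i ≤ (m : ℤ) - 1)) : walkGF m i j = 0 := by
  ext u
  simp [walkGF, walkCount_eq_zero_of_not_mem hi]

lemma walkGF_of_lt (hi : 0 ≤ i ∧ i ≤ (m : ℤ) - 1) (hij : i < j) :
    walkGF m i j = walkGF m (i + 1) j + X * walkGF m (i - 1) j := by
  ext u
  simp only [walkGF, map_add, coeff_mk]
  rw [show (j - i).natAbs + 2 * u = (j - (i + 1)).natAbs + 2 * u + 1 by omega, walkCount_succ hi]
  rcases u with _ | u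
  · rw [coeff_zero_X_mul, walkCount_eq_zero_of_lt (i := i - 1) (by omega)]
    simp
  · rw [coeff_succ_X_mul, coeff_mk,
      show (j - (i + 1)).natAbs + 2 * (u + 1) = (j - (i - 1)).natAbs + 2 * u by omega]
    push_cast; rfl

lemma walkGF_of_gt (hi : 0 ≤ i ∧ i ≤ (m : ℤ) - 1) (hij : j < i) :
    walkGF m i j = X * walkGF m (i + 1) j + walkGF m (i - 1) j := by
  ext u
  simp only [walkGF, map_add, coeff_mk]
  rw [show (j - i).natAbs + 2 * u = (j - (i - 1)).natAbs + 2 * u + 1 by omega, walkCount_succ hi]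
  rcases u with _ | u
  · rw [coeff_zero_X_mul, walkCount_eq_zero_of_lt (i := i + 1) (by omega)]
    simp
  · rw [coeff_succ_X_mul, coeff_mk,
      show (j - (i - 1)).natAbs + 2 * (u + 1) = (j - (i + 1)).natAbs + 2 * u by omega]
    push_cast; rfl

lemma walkGF_self (hj : 0 ≤ j ∧ j ≤ (m : ℤ) - 1) :
    walkGF m j j = 1 + X * walkGF m (j + 1) j + X * walkGF m (j - 1) j := by
  ext u
  simp only [walkGF, map_add, coeff_mk, coeff_one]
  rcases u with _ | u
  · simp [walkCount_zero_self hj]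
  · rw [coeff_succ_X_mul, coeff_succ_X_mul, coeff_mk, coeff_mk,
      show (j - j).natAbs + 2 * (u + 1) = 2 * u + 1 + 1 by omega, walkCount_succ hj,
      show (j - (j + 1)).natAbs + 2 * u = 2 * u + 1 by omega,
      show (j - (j - 1)).natAbs + 2 * u = 2 * u + 1 by omega]
    simp

end GeneratingFunction

section Solution

variable {m j : ℕ}

lemma walkGF_sub_one_eq_chebQ_mul (hj : j ≤ m - 1) :
    ∀ k ≤ j + 1, walkGF m ((k : ℤ) - 1) j = chebQ k * walkGF m 0 j := by
  have hrec : ∀ k, k + 2 ≤ j + 1 → walkGF m ((k + 2 : ℕ) - 1) j =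
      walkGF m ((k + 1 : ℕ) - 1) j - X * walkGF m ((k : ℕ) - 1) j := by
    intro k hk
    push_cast
    rw [show (k : ℤ) + 2 - 1 = k + 1 by ring, show (k : ℤ) + 1 - 1 = k by ring,
      walkGF_of_lt (i := k) (by omega) (by omega)]
    ring
  simpa using eq_chebQ_mul_of_recurrence (fun k => walkGF m ((k : ℤ) - 1) j)
    (walkGF_eq_zero_of_not_mem (by omega)) hrec

lemma walkGF_sub_eq_chebQ_mul :
    ∀ k ≤ m - j, walkGF m ((m : ℤ) - k) j = chebQ k * walkGF m ((m : ℤ) - 1) j := by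
  have hrec : ∀ k, k + 2 ≤ m - j → walkGF m (m - (k + 2 : ℕ)) j =
      walkGF m (m - (k + 1 : ℕ)) j - X * walkGF m (m - (k : ℕ)) j := by
    intro k hk
    push_cast
    rw [show (m : ℤ) - (k + 2) = m - (k + 1) - 1 by ring,
      show (m : ℤ) - k = m - (k + 1) + 1 by ring,
      walkGF_of_gt (i := m - (k + 1)) (by omega) (by omega)]
    ring
  simpa using eq_chebQ_mul_of_recurrence (fun k => walkGF m ((m : ℤ) - k) j)
    (walkGF_eq_zero_of_not_mem (by omega)) hrec

lemma chebP_mul_walkGF_zero (hm : 1 ≤ m) (hj : j ≤ m - 1) :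
    (chebP m : ℚ⟦X⟧) * walkGF m 0 j = chebP (m - 1 - j) := by
  set F₀ := walkGF m 0 j
  set H := walkGF m ((m : ℤ) - 1) j
  set c := m - 1 - j
  have hF : walkGF m j j = chebQ (j + 1) * F₀ := by
    simpa using walkGF_sub_one_eq_chebQ_mul hj (j + 1) le_rfl
  have hF' : walkGF m ((j : ℤ) - 1) j = chebQ j * F₀ :=
    walkGF_sub_one_eq_chebQ_mul hj j (by omega)
  have hH : walkGF m j j = chebQ (c + 1) * H := by
    have := walkGF_sub_eq_chebQ_mul (m := m) (j := j) (c + 1) (by omega)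
    rwa [show (m : ℤ) - ((c + 1 : ℕ) : ℤ) = j by omega] at this
  have hH' : walkGF m ((j : ℤ) + 1) j = chebQ c * H := by
    have := walkGF_sub_eq_chebQ_mul (m := m) (j := j) c (by omega)
    rwa [show (m : ℤ) - (c : ℤ) = j + 1 by omega] at this
  have hself := walkGF_self (m := m) (j := j) (by omega)
  rw [← chebQ_succ, ← chebQ_succ, show m = c + (j + 1) by omega, chebQ_add, chebQ_add_two]
  linear_combination -(chebQ (c + 1) - X * chebQ c) * hF + X * chebQ (c + 1) * hF'
    + chebQ (c + 1) * hself - X * chebQ c * hH + X * chebQ (c + 1) * hH'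

theorem walkGF_eq_chebP (hm : 1 ≤ m) {i : ℕ} (hij : i ≤ j) (hj : j ≤ m - 1) :
    walkGF m i j = chebP i * chebP (m - 1 - j) * (chebP m : ℚ⟦X⟧)⁻¹ := by
  have hF := walkGF_sub_one_eq_chebQ_mul hj (i + 1) (by omega)
  rw [Nat.cast_succ, add_sub_cancel_right, chebQ_succ] at hF
  rw [hF, ← chebP_mul_walkGF_zero hm hj]
  calc (chebP i : ℚ⟦X⟧) * walkGF m 0 j
      = chebP i * walkGF m 0 j * (chebP m * (chebP m : ℚ⟦X⟧)⁻¹) := by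
        rw [PowerSeries.mul_inv_cancel _ (by rw [constantCoeff_chebP]; exact one_ne_zero), mul_one]
    _ = _ := by ring

lemma coeff_walkGF {i : ℕ} (hij : i ≤ j) (u : ℕ) :
    coeff u (walkGF m i j) = walkCount m i j (j - i + 2 * u) := by
  rw [walkGF, coeff_mk, show ((j : ℤ) - i).natAbs = j - i by omega]

end Solution

section Dyck

def padPath (a N : ℕ) {n : ℕ} (mid : Fin n → Bool) : Fin N → Bool :=
  fun k => if (k : ℕ) < a then true
    else if h : (k : ℕ) - a < n then mid ⟨k - a, h⟩ else false

variable {N : ℕ}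

lemma pathSlice_padPath {a n : ℕ} (h : a + n ≤ N) (mid : Fin n → Bool) :
    pathSlice (padPath a N mid) a n h = mid := by
  funext k
  simp [pathSlice, padPath]

lemma padPath_pathSlice {a n : ℕ} (h : a + n ≤ N) (st : Fin N → Bool)
    (hpre : ∀ j : Fin N, (j : ℕ) < a → st j = true)
    (hsuf : ∀ j : Fin N, a + n ≤ (j : ℕ) → st j = false) :
    padPath a N (pathSlice st a n h) = st := by
  funext k
  simp only [padPath, pathSlice]
  split_ifs with h₁ h₂
  · exact (hpre k h₁).symm
  · exact congrArg st (Fin.ext (by simp; omega))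
  · exact (hsuf k (by omega)).symm

lemma dyck_iff_isBoundedWalk {m a n c : ℕ} (hN : a + n + c = N) (st : Fin N → Bool)
    (hpre : ∀ j : Fin N, (j : ℕ) < a → st j = true)
    (hsuf : ∀ j : Fin N, N - c ≤ (j : ℕ) → st j = false) :
    (heightAt st N = 0 ∧ ∀ i ≤ N, 0 ≤ heightAt st i ∧ heightAt st i ≤ (m : ℤ) - 1) ↔
      IsBoundedWalk m a c (pathSlice st a n (by omega)) := by
  subst hN
  have hmid : ∀ k ≤ n, heightAt st (a + k) = a + heightAt (pathSlice st a n (by omega)) k :=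
    fun k hk => by
      rw [heightAt_add st (by omega) hk, heightAt_of_forall_lt st hpre (k := a) le_rfl (by omega)]
  have htail : ∀ t ≤ c, heightAt st (a + n + t) = heightAt st (a + n) - t :=
    fun t ht => heightAt_add_of_forall_le st (fun j hj => hsuf j (by omega)) (by omega)
  constructor
  · rintro ⟨hend, hrange⟩
    refine ⟨fun k hk => hmid k hk ▸ hrange (a + k) (by omega), ?_⟩
    have := htail c le_rfl
    rw [hend, hmid n le_rfl] at this
    omega
  · rintro ⟨hrange, hend⟩
    have ha := hrange 0 (Nat.zero_le n)
    have hc := hrange n le_rfl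
    rw [heightAt_zero] at ha
    refine ⟨by rw [htail c le_rfl, hmid n le_rfl, hend]; ring, fun i hi => ?_⟩
    by_cases hia : i ≤ a
    · rw [heightAt_of_forall_lt st hpre hia hi]
      omega
    by_cases hin : i ≤ a + n
    · obtain ⟨k, rfl⟩ : ∃ k, i = a + k := ⟨i - a, by omega⟩
      rw [hmid k (by omega)]
      exact hrange k (by omega)
    · obtain ⟨t, rfl⟩ : ∃ t, i = a + n + t := ⟨i - (a + n), by omega⟩
      rw [htail t (by omega), hmid n le_rfl]
      omega

lemma card_dyck_eq_walkCount {m a n c : ℕ} (hN : a + n + c = N) :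
    Nat.card {st : Fin N → Bool // heightAt st N = 0 ∧
      (∀ i ≤ N, 0 ≤ heightAt st i ∧ heightAt st i ≤ (m : ℤ) - 1) ∧
      (∀ j : Fin N, (j : ℕ) < a → st j = true) ∧
      (∀ j : Fin N, N - c ≤ (j : ℕ) → st j = false)} = walkCount m a c n := by
  have hpad_pre : ∀ (mid : Fin n → Bool) (j : Fin N), (j : ℕ) < a →
      padPath a N mid j = true :=
    fun mid j hj => by simp [padPath, hj]
  have hpad_suf : ∀ (mid : Fin n → Bool) (j : Fin N), N - c ≤ (j : ℕ) →
      padPath a N mid j = false :=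
    fun mid j hj => by
      simp [padPath, show ¬ (j : ℕ) < a by omega, show ¬ (j : ℕ) - a < n by omega]
  rw [walkCount]
  exact Nat.card_congr
    { toFun := fun st => ⟨pathSlice st.1 a n (by omega),
        (dyck_iff_isBoundedWalk hN st.1 st.2.2.2.1 st.2.2.2.2).1 ⟨st.2.1, st.2.2.1⟩⟩
      invFun := fun w => ⟨padPath a N w.1, by
        obtain ⟨hend, hrange⟩ := (dyck_iff_isBoundedWalk hN _ (hpad_pre w.1) (hpad_suf w.1)).2
          (by rw [pathSlice_padPath]; exact w.2)
        exact ⟨hend, hrange, hpad_pre w.1, hpad_suf w.1⟩⟩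
      left_inv := fun st => Subtype.ext <| padPath_pathSlice (by omega) st.1 st.2.2.2.1
        fun j hj => st.2.2.2.2 j (by omega)
      right_inv := fun w => Subtype.ext <| pathSlice_padPath (by omega) w.1 }

lemma dyckCount_eq_walkCount {m a b : ℕ} (hab : a ≤ m - 1 - b) (u : ℕ) :
    dyckCount m a b u = walkCount m a (m - 1 - b : ℕ) (m - 1 - b - a + 2 * u) :=
  card_dyck_eq_walkCount (by omega)

end Dyck

theorem statement7_general (m r s : ℕ) (hm : 2 ≤ m)
    (hrs : r + s ≤ m - 1) (u : ℕ) :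
    PowerSeries.coeff (R := ℚ) u
      ((chebP r : PowerSeries ℚ) * (chebP (m - r - s - 1) : PowerSeries ℚ) *
        ((chebP m : PowerSeries ℚ))⁻¹)
    = (dyckCount m r (m - r - s - 1) u : ℚ) := by
  have hb : m - r - s - 1 = m - 1 - (r + s) := by omega
  rw [hb, ← walkGF_eq_chebP (by omega) (Nat.le_add_right r s) hrs,
    coeff_walkGF (Nat.le_add_right r s),
    dyckCount_eq_walkCount (by omega), show m - 1 - (m - 1 - (r + s)) = r + s by omega]

/-- fix `m ≥ 2`, `1 ≤ r ≤ m-1`, `s ≥ 0` with `r + s ≤ m-1`.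
For every `u ≥ 0`, the coefficient of `x^u` in
`p_r(x)·p_{m-r-s-1}(x)·p_m(x)^{-1} ∈ ℚ[[x]]` equals `D_m(r, m-r-s-1; u)`,
the number of Dyck paths of height at most `m-1` and semilength `r+s+u` whose
first `r` steps are up-steps and whose last `r+s` steps are down-steps. -/
theorem statement7 (m r s : ℕ) (hm : 2 ≤ m) (hr1 : 1 ≤ r) (hr2 : r ≤ m - 1)
    (hrs : r + s ≤ m - 1) (u : ℕ) :
    PowerSeries.coeff (R := ℚ) u
      ((chebP r : PowerSeries ℚ) * (chebP (m - r - s - 1) : PowerSeries ℚ) *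
        ((chebP m : PowerSeries ℚ))⁻¹)
    = (dyckCount m r (m - r - s - 1) u : ℚ) :=
  statement7_general m r s hm hrs u
end

section
/- Let m ≥ 1 and let a, b be integers with 0 ≤ a ≤ b ≤ m−1. Then in ℚ[[x]] one has p_a(x)·p_{m−1−b}(x) = p_m(x)·(Σ_{r≥0} w_{b−a+2r}^{(m)}(a,b)·x^r); equivalently, the coefficient of x^r in p_a(x)·p_{m−1−b}(x)·p_m(x)^{−1} equals w_{b−a+2r}^{(m)}(a,b) for every r ≥ 0. In particular, taking a = 0 and b = m−1, the coefficient of x^u in p_m(x)^{−1} equals B_m(u) for every u ≥ 0. -/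
/-- `stripWalkCount m L a b` is the number of strip walks of height `m-1` from
`a` to `b` of length `L`: sequences `(h₀,…,h_L)` of integers with `h₀ = a`,
`h_L = b`, `h_{i+1} - h_i ∈ {±1}`, and `0 ≤ h_i ≤ m-1` for all `i`.
Heights in `{0,…,m-1}` are encoded as elements of `Fin m`. -/
noncomputable def stripWalkCount (m L a b : ℕ) : ℕ :=
  Nat.card {h : Fin (L + 1) → Fin m //
    (h 0 : ℕ) = a ∧ (h (Fin.last L) : ℕ) = b ∧
    ∀ i : Fin L, ((h i.succ : ℤ) = (h i.castSucc : ℤ) + 1 ∨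
                  (h i.succ : ℤ) = (h i.castSucc : ℤ) - 1)}

/-- `B m u` is the number of full-height strip walks of height `m-1`
from `0` to `m-1` with excess `u`, i.e. of length `m-1+2u`. -/
noncomputable def fullB (m u : ℕ) : ℕ := stripWalkCount m (m - 1 + 2 * u) 0 (m - 1)

def IsStep {m : ℕ} (x y : Fin m) : Prop := (y : ℤ) = x + 1 ∨ (y : ℤ) = x - 1

def stripPaths (m L a : ℕ) : Set (Fin (L + 1) → Fin m) :=
  {h | (h 0 : ℕ) = a ∧ ∀ i : Fin L, IsStep (h i.castSucc) (h i.succ)}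

def stripWalks (m L a b : ℕ) : Set (Fin (L + 1) → Fin m) :=
  {h ∈ stripPaths m L a | (h (Fin.last L) : ℕ) = b}

lemma stripWalkCount_eq_ncard (m L a b : ℕ) :
    stripWalkCount m L a b = (stripWalks m L a b).ncard :=
  Nat.card_congr <| Equiv.subtypeEquivRight fun _ => by
    simp only [stripWalks, stripPaths, IsStep, Set.mem_ofPred_eq]
    tauto

lemma val_le_of_mem_stripPaths {m L a : ℕ} {h : Fin (L + 1) → Fin m}
    (hh : h ∈ stripPaths m L a) (i : Fin (L + 1)) : (h i : ℕ) ≤ a + i := by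
  obtain ⟨h0, hstep⟩ := hh
  induction i using Fin.induction with
  | zero => simp [h0]
  | succ i ih =>
    have := hstep i
    simp only [IsStep, Fin.val_succ, Fin.val_castSucc] at this ih ⊢
    omega

lemma stripWalkCount_eq_zero_of_lt {m L a b : ℕ} (h : a + L < b) :
    stripWalkCount m L a b = 0 := by
  rw [stripWalkCount_eq_ncard, Set.ncard_eq_zero, Set.eq_empty_iff_forall_notMem]
  rintro g ⟨hg, hb⟩
  have := val_le_of_mem_stripPaths hg (Fin.last L)
  rw [hb, Fin.val_last] at this
  omega

lemma stripWalkCount_eq_zero_of_le {m L a b : ℕ} (hb : m ≤ b) : stripWalkCount m L a b = 0 := by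
  rw [stripWalkCount_eq_ncard, Set.ncard_eq_zero, Set.eq_empty_iff_forall_notMem]
  rintro g ⟨-, hg⟩
  have := (g (Fin.last L)).isLt
  omega

lemma stripWalkCount_zero_self {m a : ℕ} (ha : a < m) : stripWalkCount m 0 a a = 1 := by
  rw [stripWalkCount_eq_ncard, Set.ncard_eq_one]
  refine ⟨fun _ => ⟨a, ha⟩, Set.ext fun h => ⟨fun hh => funext fun i => ?_, ?_⟩⟩
  · rw [Fin.fin_one_eq_zero i]
    exact Fin.ext hh.1.1
  · rintro rfl
    exact ⟨⟨rfl, Fin.elim0⟩, rfl⟩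

lemma snoc_mem_stripPaths_iff {m L a : ℕ} (g : Fin (L + 1) → Fin m) (x : Fin m) :
    (Fin.snoc g x : Fin (L + 2) → Fin m) ∈ stripPaths m (L + 1) a ↔
      g ∈ stripPaths m L a ∧ IsStep (g (Fin.last L)) x := by
  simp only [stripPaths, Set.mem_ofPred_eq, Fin.forall_fin_succ', Fin.snoc_last, Fin.succ_last,
    Fin.snoc_castSucc, Fin.succ_castSucc]
  rw [← Fin.castSucc_zero, Fin.snoc_castSucc]
  tauto

lemma stripWalks_succ {m L a b : ℕ} (hb : b < m) :
    stripWalks m (L + 1) a b =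
      (fun g : Fin (L + 1) → Fin m => (Fin.snoc g ⟨b, hb⟩ : Fin (L + 2) → Fin m)) ''
        {g ∈ stripPaths m L a | IsStep (g (Fin.last L)) ⟨b, hb⟩} := by
  ext h
  constructor
  · rintro ⟨hh, hlast⟩
    replace hlast : h (Fin.last (L + 1)) = ⟨b, hb⟩ := Fin.ext hlast
    rw [← Fin.snoc_init_self h, hlast, snoc_mem_stripPaths_iff] at hh
    refine ⟨Fin.init h, hh, ?_⟩
    simp only [← hlast, Fin.snoc_init_self]
  · rintro ⟨g, hg, rfl⟩
    exact ⟨(snoc_mem_stripPaths_iff g _).2 hg, by simp⟩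

lemma stripWalkCount_succ {m L a b : ℕ} (hb₀ : 1 ≤ b) (hb : b < m) :
    stripWalkCount m (L + 1) a b = stripWalkCount m L a (b - 1) + stripWalkCount m L a (b + 1) := by
  have hsplit : {g ∈ stripPaths m L a | IsStep (g (Fin.last L)) ⟨b, hb⟩} =
      stripWalks m L a (b - 1) ∪ stripWalks m L a (b + 1) := by
    ext g
    simp only [stripWalks, IsStep, Set.mem_union, Set.mem_ofPred_eq, ← and_or_left]
    exact and_congr_right fun _ => by omega
  have hdisj : Disjoint (stripWalks m L a (b - 1)) (stripWalks m L a (b + 1)) :=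
    Set.disjoint_left.2 fun g h₁ h₂ => by have := h₁.2.symm.trans h₂.2; omega
  rw [stripWalkCount_eq_ncard, stripWalks_succ hb, hsplit,
    Set.ncard_image_of_injective _ (Fin.snoc_left_injective (α := fun _ => Fin m) _),
    Set.ncard_union_eq hdisj,
    stripWalkCount_eq_ncard, stripWalkCount_eq_ncard]

lemma stripWalkCount_succ_zero {m L a : ℕ} (hm : 0 < m) :
    stripWalkCount m (L + 1) a 0 = stripWalkCount m L a 1 := by
  have hone : {g ∈ stripPaths m L a | IsStep (g (Fin.last L)) ⟨0, hm⟩} = stripWalks m L a 1 := by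
    ext g
    simp only [stripWalks, IsStep, Set.mem_ofPred_eq]
    exact and_congr_right fun _ => by omega
  rw [stripWalkCount_eq_ncard, stripWalks_succ hm, hone,
    Set.ncard_image_of_injective _ (Fin.snoc_left_injective (α := fun _ => Fin m) _),
    stripWalkCount_eq_ncard]

def stripWalkFlip {m L : ℕ} (h : Fin (L + 1) → Fin m) : Fin (L + 1) → Fin m :=
  fun i => (h i.rev).rev

lemma stripWalkFlip_mem_stripWalks {m L a b : ℕ} {h : Fin (L + 1) → Fin m}
    (hh : h ∈ stripWalks m L a b) : stripWalkFlip h ∈ stripWalks m L (m - 1 - b) (m - 1 - a) := by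
  obtain ⟨⟨h0, hstep⟩, hlast⟩ := hh
  refine ⟨⟨?_, fun i => ?_⟩, ?_⟩
  · simp only [stripWalkFlip, Fin.rev_zero, Fin.val_rev, hlast]
    omega
  · have := hstep i.rev
    simp only [stripWalkFlip, IsStep, Fin.rev_succ, Fin.rev_castSucc, Fin.val_rev] at this ⊢
    omega
  · simp only [stripWalkFlip, Fin.rev_last, Fin.val_rev, h0]
    omega

lemma stripWalkCount_le_flip (m L a b : ℕ) :
    stripWalkCount m L a b ≤ stripWalkCount m L (m - 1 - b) (m - 1 - a) := by
  simp only [stripWalkCount_eq_ncard]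
  refine Set.ncard_le_ncard_of_injOn _ (fun h hh => stripWalkFlip_mem_stripWalks hh) ?_
  intro g _ h _ hgh
  funext i
  simpa [stripWalkFlip] using congrFun hgh i.rev

lemma stripWalkCount_flip {m L a b : ℕ} (ha : a < m) (hb : b < m) :
    stripWalkCount m L a b = stripWalkCount m L (m - 1 - b) (m - 1 - a) := by
  refine (stripWalkCount_le_flip m L a b).antisymm ?_
  have := stripWalkCount_le_flip m L (m - 1 - b) (m - 1 - a)
  rwa [show m - 1 - (m - 1 - a) = a by omega, show m - 1 - (m - 1 - b) = b by omega] at this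

section

open PowerSeries

noncomputable def walkSeries (m a b : ℕ) : ℚ⟦X⟧ :=
  mk fun r => (stripWalkCount m (b - a + 2 * r) a b : ℚ)

lemma walkSeries_eq_zero_of_le {m a b : ℕ} (hb : m ≤ b) : walkSeries m a b = 0 := by
  ext r
  simp [walkSeries, stripWalkCount_eq_zero_of_le hb]

lemma walkSeries_eq_add_X_mul {m a b : ℕ} (hab : a < b) (hb : b < m) :
    walkSeries m a b = walkSeries m a (b - 1) + X * walkSeries m a (b + 1) := by
  ext r
  rw [map_add, walkSeries, coeff_mk, show b - a + 2 * r = (b - 1 - a + 2 * r) + 1 by omega,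
    stripWalkCount_succ (by omega) hb, Nat.cast_add, walkSeries, coeff_mk]
  congr 1
  cases r with
  | zero => simp [stripWalkCount_eq_zero_of_lt (show a + (b - 1 - a) < b + 1 by omega)]
  | succ r =>
    rw [coeff_succ_X_mul, walkSeries, coeff_mk,
      show b - 1 - a + 2 * (r + 1) = b + 1 - a + 2 * r by omega]

lemma walkSeries_zero_zero {m : ℕ} (hm : 0 < m) : walkSeries m 0 0 = 1 + X * walkSeries m 0 1 := by
  ext r
  cases r with
  | zero => simp [walkSeries, stripWalkCount_zero_self hm]
  | succ r =>
    rw [map_add, coeff_succ_X_mul, walkSeries, walkSeries, coeff_mk, coeff_mk, coeff_one,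
      if_neg r.succ_ne_zero, zero_add, show 0 - 0 + 2 * (r + 1) = (1 - 0 + 2 * r) + 1 by omega,
      stripWalkCount_succ_zero hm]

lemma walkSeries_flip {m a b : ℕ} (hab : a ≤ b) (hb : b < m) :
    walkSeries m a b = walkSeries m (m - 1 - b) (m - 1 - a) := by
  ext r
  rw [walkSeries, walkSeries, coeff_mk, coeff_mk, stripWalkCount_flip (by omega) hb,
    show m - 1 - a - (m - 1 - b) = b - a by omega]

lemma coe_chebP_add_two (k : ℕ) :
    (chebP (k + 2) : ℚ⟦X⟧) = (chebP (k + 1) : ℚ⟦X⟧) - X * (chebP k : ℚ⟦X⟧) := by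
  rw [chebP, Polynomial.coe_sub, Polynomial.coe_mul, Polynomial.coe_X]

lemma walkSeries_sub_eq_chebP_mul {m a : ℕ} (k : ℕ) (hk : a + k < m) :
    walkSeries m a (m - 1 - k) = chebP k * walkSeries m a (m - 1) := by
  induction k using Nat.twoStepInduction with
  | zero => simp [chebP]
  | one =>
    have hrec := walkSeries_eq_add_X_mul (m := m) (a := a) (b := m - 1) (by omega) (by omega)
    rw [show m - 1 + 1 = m by omega, walkSeries_eq_zero_of_le le_rfl, mul_zero, add_zero] at hrec
    simp [chebP, hrec]
  | more k ih₀ ih₁ =>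
    have hrec :=
      walkSeries_eq_add_X_mul (m := m) (a := a) (b := m - 1 - (k + 1)) (by omega) (by omega)
    rw [show m - 1 - (k + 1) - 1 = m - 1 - (k + 2) by omega,
      show m - 1 - (k + 1) + 1 = m - 1 - k by omega, ih₀ (by omega), ih₁ (by omega)] at hrec
    rw [coe_chebP_add_two]
    linear_combination -hrec

lemma chebP_mul_walkSeries_zero {m : ℕ} (hm : 0 < m) :
    (chebP m : ℚ⟦X⟧) * walkSeries m 0 (m - 1) = 1 := by
  obtain ⟨n, rfl⟩ : ∃ n, m = n + 1 := ⟨m - 1, by omega⟩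
  have h00 := walkSeries_zero_zero hm
  cases n with
  | zero => simpa [chebP, walkSeries_eq_zero_of_le] using h00
  | succ n =>
    have h₀ := walkSeries_sub_eq_chebP_mul (m := n + 2) (a := 0) (n + 1) (by omega)
    have h₁ := walkSeries_sub_eq_chebP_mul (m := n + 2) (a := 0) n (by omega)
    rw [show n + 2 - 1 - (n + 1) = 0 by omega] at h₀
    rw [show n + 2 - 1 - n = 1 by omega] at h₁
    rw [coe_chebP_add_two]
    linear_combination h00 - h₀ + X * h₁

lemma chebP_mul_walkSeries {m a b : ℕ} (hab : a ≤ b) (hb : b < m) :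
    (chebP m : ℚ⟦X⟧) * walkSeries m a b = chebP a * chebP (m - 1 - b) := by
  have hb' := walkSeries_sub_eq_chebP_mul (m := m) (a := a) (m - 1 - b) (by omega)
  have ha' := walkSeries_sub_eq_chebP_mul (m := m) (a := 0) a (by omega)
  rw [show m - 1 - (m - 1 - b) = b by omega] at hb'
  have hflip := walkSeries_flip (m := m) (a := a) (b := m - 1) (by omega) (by omega)
  rw [Nat.sub_self] at hflip
  rw [hb', hflip, ha']
  linear_combination
    (chebP a * chebP (m - 1 - b) : ℚ⟦X⟧) * chebP_mul_walkSeries_zero (by omega : 0 < m)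

lemma inv_chebP_eq_walkSeries {m : ℕ} (hm : 0 < m) :
    (chebP m : ℚ⟦X⟧)⁻¹ = walkSeries m 0 (m - 1) := by
  have hunit : constantCoeff (chebP m : ℚ⟦X⟧) ≠ 0 := by
    intro h
    simpa [h] using congrArg constantCoeff (chebP_mul_walkSeries_zero hm)
  exact (inv_eq_iff_mul_eq_one hunit).2 (by rw [mul_comm, chebP_mul_walkSeries_zero hm])

end

/-- let `m ≥ 1` and `0 ≤ a ≤ b ≤ m-1`.  Then in `ℚ[[x]]`,
`p_a(x)·p_{m-1-b}(x) = p_m(x)·(Σ_r w^{(m)}_{b-a+2r}(a,b)·x^r)`; equivalently,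
the coefficient of `x^r` in `p_a(x)·p_{m-1-b}(x)·p_m(x)^{-1}` equals
`w^{(m)}_{b-a+2r}(a,b)` for every `r ≥ 0`.  In particular (taking `a = 0`,
`b = m-1`), the coefficient of `x^u` in `p_m(x)^{-1}` equals `B_m(u)`. -/
theorem statement13 (m a b : ℕ) (hm : 1 ≤ m) (hab : a ≤ b) (hb : b ≤ m - 1) :
    ((chebP a : PowerSeries ℚ) * (chebP (m - 1 - b) : PowerSeries ℚ)
        = (chebP m : PowerSeries ℚ) *
            PowerSeries.mk (fun r => (stripWalkCount m (b - a + 2 * r) a b : ℚ))) ∧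
    (∀ r : ℕ,
      PowerSeries.coeff (R := ℚ) r
        ((chebP a : PowerSeries ℚ) * (chebP (m - 1 - b) : PowerSeries ℚ) *
          ((chebP m : PowerSeries ℚ))⁻¹)
      = (stripWalkCount m (b - a + 2 * r) a b : ℚ)) ∧
    (∀ u : ℕ,
      PowerSeries.coeff (R := ℚ) u ((chebP m : PowerSeries ℚ))⁻¹ = (fullB m u : ℚ)) := by
  have hprod := chebP_mul_walkSeries hab (by omega : b < m)
  have hinv := inv_chebP_eq_walkSeries hm
  refine ⟨hprod.symm, fun r => ?_, fun u => ?_⟩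
  · rw [← hprod, mul_right_comm, hinv, chebP_mul_walkSeries_zero hm, one_mul, walkSeries,
      PowerSeries.coeff_mk]
  · rw [hinv, walkSeries, PowerSeries.coeff_mk, Nat.sub_zero, fullB]
end
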